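/- Let S = (H, w, μ) be a summary, q a CQ with res(q) ⊆ dom(μ), τ an answer to μ(q) on H, and P ∈ B_τ. Then the number of maximal τ-expansions to P satisfies |MaxExp_τ(P)| = Σ_{P' ∈ B_τ, P ⪯ P'} K(P,P') · c(τ,P'). -/

import Mathlib

/- ## Basic RDF notions -/

attribute [local instance] Classical.propDecidable

/-- A term is a resource or a variable. -/
inductive Term (R V : Type) where
  | res : R → Term R V
  | var : V → Term R V
deriving DecidableEq

/-- An atom is a triple of terms. -/
abbrev Atom (R V : Type) := Term R V × Term R V × Term R V

/-- An RDF graph is a finite set of triples of resources. -/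
abbrev RDFGraph (R : Type) := Finset (R × R × R)

/-- A conjunctive query is a finite set of atoms. -/
abbrev CQ (R V : Type) := Finset (Atom R V)

variable {R V : Type} [DecidableEq R] [DecidableEq V]

/-- The resources occurring in an RDF graph. -/
def graphRes (G : RDFGraph R) : Finset R :=
  G.image (fun t => t.1) ∪ G.image (fun t => t.2.1) ∪ G.image (fun t => t.2.2)

/-- A summary `S = (H, w, μ)`: a summarisation graph `H`, a weight function `w`
positive on `H`, and a summarisation function `μ` defined on a finite set `dom` of
resources, surjective onto the resources of `H` (the buckets). -/
structure Summary (R : Type) [DecidableEq R] where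
  H : RDFGraph R
  w : R × R × R → ℕ
  dom : Finset R
  μ : R → R
  w_pos : ∀ h ∈ H, 0 < w h
  surj : ∀ b ∈ graphRes H, ∃ r ∈ dom, μ r = b

/-- Application of `μ` to a resource (resources outside `dom μ` are left unchanged). -/
def appMu (S : Summary R) (r : R) : R := if r ∈ S.dom then S.μ r else r

/-- Application of `μ` to a triple of resources. -/
def muT (S : Summary R) (t : R × R × R) : R × R × R :=
  (appMu S t.1, appMu S t.2.1, appMu S t.2.2)

/-- The `S`-size of a bucket: the number of resources mapped to it. -/
def size1 (S : Summary R) (b : R) : ℕ := (S.dom.filter (fun r => S.μ r = b)).card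

/-- The `S`-size of a triple of buckets. -/
def size3 (S : Summary R) (h : R × R × R) : ℕ := size1 S h.1 * size1 S h.2.1 * size1 S h.2.2

/-- `S` represents the RDF graph `G`. -/
def represents (S : Summary R) (G : RDFGraph R) : Prop :=
  graphRes G ⊆ S.dom ∧ S.H = G.image (muT S) ∧
    ∀ h ∈ S.H, S.w h = (G.filter (fun t => muT S t = h)).card

/-- `⟦S⟧`: the set of all RDF graphs represented by `S`. -/
def worlds (S : Summary R) : Set (RDFGraph R) := {G | represents S G}

/-- A summary is consistent if it represents at least one graph. -/
def consistent (S : Summary R) : Prop := (worlds S).Nonempty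

/- ## Queries, substitutions and answers -/

def varsT : Term R V → Finset V
  | .res _ => ∅
  | .var x => {x}

def resT : Term R V → Finset R
  | .res r => {r}
  | .var _ => ∅

def varsA (a : Atom R V) : Finset V := varsT a.1 ∪ varsT a.2.1 ∪ varsT a.2.2

def resA (a : Atom R V) : Finset R := resT a.1 ∪ resT a.2.1 ∪ resT a.2.2

/-- The variables of a CQ. -/
def varsQ (q : CQ R V) : Finset V := q.biUnion varsA

/-- The resources of a CQ. -/
def resQ (q : CQ R V) : Finset R := q.biUnion resA

/-- The terms of a CQ. -/
def termsQ (q : CQ R V) : Finset (Term R V) := q.biUnion (fun a => {a.1, a.2.1, a.2.2})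

/-- A substitution (a partial map from variables to resources) applied to a term. -/
def appT (π : V → Option R) : Term R V → Option R
  | .res r => some r
  | .var x => π x

/-- Application of a substitution to a term, with a default value (only used when the
substitution is undefined on a variable of the term). -/
def appTD [Inhabited R] (π : V → Option R) (t : Term R V) : R := (appT π t).getD default

/-- Application of a substitution to an atom. -/
def appAtomD [Inhabited R] (π : V → Option R) (a : Atom R V) : R × R × R :=
  (appTD π a.1, appTD π a.2.1, appTD π a.2.2)

/-- `ans(q, G)`: the answers to the CQ `q` on the graph `G`, i.e. substitutions whose
domain is exactly `var(q)` and which map every atom of `q` into `G`. -/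
def ansSet [Inhabited R] (q : CQ R V) (G : RDFGraph R) : Set (V → Option R) :=
  {π | (∀ x, (π x).isSome ↔ x ∈ varsQ q) ∧ ∀ a ∈ q, appAtomD π a ∈ G}

/-- `E_S[q]`: the expected cardinality of `q` over the graphs represented by `S`. -/
noncomputable def expect [Inhabited R] (S : Summary R) (q : CQ R V) : ℝ :=
  (∑ᶠ G ∈ worlds S, ((ansSet q G).ncard : ℝ)) / ((worlds S).ncard : ℝ)

/-- `v_S[q]`: the variance of the cardinality of `q` over the graphs represented by `S`. -/
noncomputable def varq [Inhabited R] (S : Summary R) (q : CQ R V) : ℝ :=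
  (∑ᶠ G ∈ worlds S, (((ansSet q G).ncard : ℝ) - expect S q) ^ 2) / ((worlds S).ncard : ℝ)

/-- `μ` applied to a term. -/
def muTerm (S : Summary R) : Term R V → Term R V
  | .res r => .res (appMu S r)
  | .var x => .var x

/-- `μ` applied to an atom. -/
def muAtom (S : Summary R) (a : Atom R V) : Atom R V :=
  (muTerm S a.1, muTerm S a.2.1, muTerm S a.2.2)

/-- `μ(q)`: the CQ obtained by applying `μ` to every atom of `q`. -/
def muQ (S : Summary R) (q : CQ R V) : CQ R V := q.image (muAtom S)

/- ## Partitions of a query -/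

/-- A partition of a CQ `q`: mutually disjoint nonempty subsets of `q` covering `q`. -/
def IsPartition (q : CQ R V) (P : Finset (CQ R V)) : Prop :=
  (∀ u ∈ P, u.Nonempty) ∧ (∀ u ∈ P, ∀ u' ∈ P, u ≠ u' → Disjoint u u') ∧ P.biUnion id = q

/-- The edges of the term graph `G_P`. -/
def edgeRel (P : Finset (CQ R V)) (t t' : Term R V) : Prop :=
  ∃ u ∈ P, ∃ a ∈ u, ∃ a' ∈ u,
    (t = a.1 ∧ t' = a'.1) ∨ (t = a.2.1 ∧ t' = a'.2.1) ∨ (t = a.2.2 ∧ t' = a'.2.2)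

/-- Reachability in the term graph `G_P`. -/
def reach (P : Finset (CQ R V)) (t t' : Term R V) : Prop := Relation.EqvGen (edgeRel P) t t'

/-- `P` is unifiable: no two distinct resources of `q` are connected in `G_P`. -/
def UnifiablePart (q : CQ R V) (P : Finset (CQ R V)) : Prop :=
  ∀ r r' : R, Term.res r ∈ termsQ q → Term.res r' ∈ termsQ q →
    reach P (Term.res r) (Term.res r') → r = r'

/-- The partition base `B` of `q`: all unifiable partitions of `q`. -/
def pbase (q : CQ R V) : Set (Finset (CQ R V)) := {P | IsPartition q P ∧ UnifiablePart q P}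

/-- The partial order `⪯` on partitions. -/
def pref (P P' : Finset (CQ R V)) : Prop := ∀ u ∈ P, ∃ u' ∈ P', u ⊆ u'

/-- The strict order `≺` on partitions. -/
def sPref (P P' : Finset (CQ R V)) : Prop := pref P P' ∧ P ≠ P'

/-- Chains from `P` to `P'` in the partition base of `q` (as nonempty lists
`[P = P_0, …, P_ℓ = P']`; the length of the chain is the list length minus one). -/
def chainSet (q : CQ R V) (P P' : Finset (CQ R V)) : Set (List (Finset (CQ R V))) :=
  {l | l ≠ [] ∧ l.Chain' sPref ∧ (∀ X ∈ l, X ∈ pbase q) ∧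
    l.head? = some P ∧ l.getLast? = some P'}

/-- `K(P, P')`: the number of even-length chains minus the number of odd-length chains. -/
noncomputable def Kcoef (q : CQ R V) (P P' : Finset (CQ R V)) : ℤ :=
  ({l ∈ chainSet q P P' | Even (l.length - 1)}.ncard : ℤ)
    - ({l ∈ chainSet q P P' | Odd (l.length - 1)}.ncard : ℤ)

/-- `σ_P`: maps each variable `x` of `q` to the `≤`-least term reachable from `x` in `G_P`. -/
noncomputable def sigmaP [LinearOrder (Term R V)] (q : CQ R V) (P : Finset (CQ R V)) (x : V) :
    Term R V :=
  if h : ((termsQ q).filter (fun t => reach P (Term.var x) t)).Nonempty then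
    ((termsQ q).filter (fun t => reach P (Term.var x) t)).min' h
  else Term.var x

/-- The answer `τ` to `μ(q)` on `H` satisfies the partition `P`. -/
def satisfiesP [LinearOrder (Term R V)] (S : Summary R) (q : CQ R V) (τ : V → Option R)
    (P : Finset (CQ R V)) : Prop :=
  P ∈ pbase q ∧ ∀ x ∈ varsQ q,
    (∀ y, sigmaP q P x = Term.var y → τ x = τ y) ∧
    (∀ r, sigmaP q P x = Term.res r → τ x = some (appMu S r))

/-- `B_τ`: the partitions of the partition base satisfied by `τ`. -/
def Btau [LinearOrder (Term R V)] (S : Summary R) (q : CQ R V) (τ : V → Option R) :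
    Set (Finset (CQ R V)) := {P | satisfiesP S q τ P}

/-- The variables occurring in the range of `σ_P`. -/
noncomputable def vrngP [LinearOrder (Term R V)] (q : CQ R V) (P : Finset (CQ R V)) : Finset V :=
  (varsQ q).filter (fun y => ∃ x ∈ varsQ q, sigmaP q P x = Term.var y)

/-- The `S`-size of an optional bucket. -/
def sizeOpt (S : Summary R) (o : Option R) : ℕ := o.elim 0 (size1 S)

/-- `c(τ, P) = ∏_{x ∈ vrng(σ_P)} size_S(τ(x))`. -/
noncomputable def cCoef [LinearOrder (Term R V)] (S : Summary R) (q : CQ R V)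
    (τ : V → Option R) (P : Finset (CQ R V)) : ℕ :=
  ∏ y ∈ vrngP q P, sizeOpt S (τ y)

/-- `τ(μ(q))`. -/
noncomputable def tauMuQ [Inhabited R] (S : Summary R) (q : CQ R V) (τ : V → Option R) :
    RDFGraph R := (muQ S q).image (appAtomD τ)

/-- `n_h = |{u ∈ P : τ(μ(u)) = {h}}|`. -/
noncomputable def nCount [Inhabited R] (S : Summary R) (τ : V → Option R)
    (P : Finset (CQ R V)) (h : R × R × R) : ℕ :=
  (P.filter (fun u => u.image (fun a => appAtomD τ (muAtom S a)) = ({h} : Finset (R × R × R)))).card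

/-- `F(τ, P)`, defined via falling factorials. -/
noncomputable def Fcoef [Inhabited R] (S : Summary R) (q : CQ R V) (τ : V → Option R)
    (P : Finset (CQ R V)) : ℝ :=
  if ∀ h ∈ tauMuQ S q τ, nCount S τ P h ≤ S.w h then
    ∏ h ∈ tauMuQ S q τ,
      ((S.w h).descFactorial (nCount S τ P h) : ℝ) / ((size3 S h).descFactorial (nCount S τ P h) : ℝ)
  else 0

/-- `Exp_τ(P)`: the `τ`-expansions to `P`. -/
def ExpSet [LinearOrder (Term R V)] (S : Summary R) (q : CQ R V) (τ : V → Option R)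
    (P : Finset (CQ R V)) : Set (V → Option R) :=
  {π | (∀ x, (π x).isSome ↔ x ∈ varsQ q) ∧ (∀ x r, π x = some r → r ∈ S.dom) ∧
    ∀ x ∈ varsQ q,
      Option.map (appMu S) (π x) = τ x ∧
      (∀ y, sigmaP q P x = Term.var y → π x = π y) ∧
      (∀ r, sigmaP q P x = Term.res r → π x = some r)}

/-- `MaxExp_τ(P)`: the `τ`-expansions to `P` that are not `τ`-expansions to any `P' ≻ P`. -/
def MaxExp [LinearOrder (Term R V)] (S : Summary R) (q : CQ R V) (τ : V → Option R)
    (P : Finset (CQ R V)) : Set (V → Option R) :=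
  {π ∈ ExpSet S q τ P | ¬ ∃ P' ∈ Btau S q τ, sPref P P' ∧ π ∈ ExpSet S q τ P'}

/- ## Renaming, unification, q-error -/

def renTerm (ρ : V → V) : Term R V → Term R V
  | .res r => .res r
  | .var x => .var (ρ x)

/-- `ρ(q)`: renaming of the variables of `q` along `ρ`. -/
def renameQ (ρ : V → V) (q : CQ R V) : CQ R V :=
  q.image (fun a => (renTerm ρ a.1, renTerm ρ a.2.1, renTerm ρ a.2.2))

/-- Application of a variable-to-term substitution `κ` to a term. -/
def appK (κ : V → Term R V) : Term R V → Term R V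
  | .res r => .res r
  | .var x => κ x

/-- Two atoms are unifiable if some substitution `κ` makes them equal. -/
def unifAtoms (a1 a2 : Atom R V) : Prop :=
  ∃ κ : V → Term R V,
    (appK κ a1.1, appK κ a1.2.1, appK κ a1.2.2) = (appK κ a2.1, appK κ a2.2.1, appK κ a2.2.2)

/-- `q` is `μ`-unification-free: no two distinct atoms of `μ(q)` are unifiable. -/
def muUnifFree (S : Summary R) (q : CQ R V) : Prop :=
  ∀ a1 ∈ muQ S q, ∀ a2 ∈ muQ S q, a1 ≠ a2 → ¬ unifAtoms a1 a2

/-- The q-error of estimating a cardinality `N` as `E`. -/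
noncomputable def qerror (N E : ℝ) : ℝ := max (max N 1 / max E 1) (max E 1 / max N 1)

/-- A triple of resources viewed as a (variable-free) atom. -/
def resAtom (t : R × R × R) : Atom R V := (Term.res t.1, Term.res t.2.1, Term.res t.2.2)

/-- `μ⁻¹(h)`: the triples over `dom(μ)` that summarise as `h`. -/
def preim (S : Summary R) (h : R × R × R) : Finset (R × R × R) :=
  (S.dom ×ˢ S.dom ×ˢ S.dom).filter (fun t => muT S t = h)

/- ## Auxiliary development for Statement 10 -/
set_option linter.unusedSectionVars false

section Aux

variable {R V : Type} [DecidableEq R] [DecidableEq V]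

/- ### Order lemmas -/

lemma pref_refl (P : Finset (CQ R V)) : pref P P := fun u hu => ⟨u, hu, subset_rfl⟩

lemma pref_trans {P1 P2 P3 : Finset (CQ R V)} (h1 : pref P1 P2) (h2 : pref P2 P3) :
    pref P1 P3 := by
  intro u hu
  obtain ⟨u', hu', hsub⟩ := h1 u hu
  obtain ⟨u'', hu'', hsub'⟩ := h2 u' hu'
  exact ⟨u'', hu'', hsub.trans hsub'⟩

lemma block_subset {q : CQ R V} {P : Finset (CQ R V)} (h : IsPartition q P) {u : CQ R V}
    (hu : u ∈ P) : u ⊆ q := by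
  intro a ha
  rw [← h.2.2]
  exact Finset.mem_biUnion.2 ⟨u, hu, ha⟩

lemma part_mem_pp {q : CQ R V} {P : Finset (CQ R V)} (h : IsPartition q P) :
    P ∈ q.powerset.powerset := by
  rw [Finset.mem_powerset]
  intro u hu
  rw [Finset.mem_powerset]
  exact block_subset h hu

lemma pref_antisymm {q : CQ R V} {P P' : Finset (CQ R V)} (hP : IsPartition q P)
    (hP' : IsPartition q P') (h : pref P P') (h' : pref P' P) : P = P' := by
  have key : ∀ (A B : Finset (CQ R V)), IsPartition q A → IsPartition q B →
      pref A B → pref B A → A ⊆ B := by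
    intro A B hA hB hAB hBA u hu
    obtain ⟨u', hu', hsub⟩ := hAB u hu
    obtain ⟨u'', hu'', hsub'⟩ := hBA u' hu'
    have huu : u = u'' := by
      by_contra hne
      have hd := hA.2.1 u hu u'' hu'' hne
      obtain ⟨a, ha⟩ := hA.1 u hu
      exact (Finset.disjoint_left.1 hd) ha (hsub' (hsub ha))
    have : u = u' := subset_antisymm hsub (huu ▸ hsub')
    exact this ▸ hu'
  exact subset_antisymm (key P P' hP hP' h h') (key P' P hP' hP h' h)

/- ### Reachability lemmas -/

lemma reach_refl (P : Finset (CQ R V)) (t : Term R V) : reach P t t := Relation.EqvGen.refl t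

lemma reach_symm {P : Finset (CQ R V)} {t t' : Term R V} (h : reach P t t') : reach P t' t :=
  Relation.EqvGen.symm _ _ h

lemma reach_trans {P : Finset (CQ R V)} {t t' t'' : Term R V} (h : reach P t t')
    (h' : reach P t' t'') : reach P t t'' := Relation.EqvGen.trans _ _ _ h h'

lemma edgeRel_mono {P P' : Finset (CQ R V)} (h : pref P P') {t t' : Term R V}
    (he : edgeRel P t t') : edgeRel P' t t' := by
  obtain ⟨u, hu, a, ha, a', ha', hcase⟩ := he
  obtain ⟨u', hu', hsub⟩ := h u hu
  exact ⟨u', hu', a, hsub ha, a', hsub ha', hcase⟩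

lemma reach_mono {P P' : Finset (CQ R V)} (h : pref P P') {t t' : Term R V}
    (hr : reach P t t') : reach P' t t' :=
  Relation.EqvGen.mono (r := edgeRel P) (p := edgeRel P') (fun _ _ he => edgeRel_mono h he) t t' hr

lemma mem_termsQ_of_mem {q : CQ R V} {a : Atom R V} (ha : a ∈ q) :
    a.1 ∈ termsQ q ∧ a.2.1 ∈ termsQ q ∧ a.2.2 ∈ termsQ q := by
  refine ⟨?_, ?_, ?_⟩ <;>
    · apply Finset.mem_biUnion.2 ⟨a, ha, ?_⟩
      simp

lemma edgeRel_mem_terms {q : CQ R V} {P : Finset (CQ R V)} (hP : IsPartition q P)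
    {t t' : Term R V} (h : edgeRel P t t') : t ∈ termsQ q ∧ t' ∈ termsQ q := by
  obtain ⟨u, hu, a, ha, a', ha', hcase⟩ := h
  have haq : a ∈ q := block_subset hP hu ha
  have haq' : a' ∈ q := block_subset hP hu ha'
  have h1 := mem_termsQ_of_mem haq
  have h2 := mem_termsQ_of_mem haq'
  rcases hcase with ⟨h3, h4⟩ | ⟨h3, h4⟩ | ⟨h3, h4⟩ <;> subst h3 <;> subst h4 <;> tauto

lemma reach_mem_terms {q : CQ R V} {P : Finset (CQ R V)} (hP : IsPartition q P)
    {t t' : Term R V} (h : reach P t t') : t = t' ∨ (t ∈ termsQ q ∧ t' ∈ termsQ q) := by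
  induction h with
  | rel t t' h => exact Or.inr (edgeRel_mem_terms hP h)
  | refl t => exact Or.inl rfl
  | symm t t' _ ih => tauto
  | trans t t' t'' _ _ ih1 ih2 =>
    rcases ih1 with h1 | h1 <;> rcases ih2 with h2 | h2
    · exact Or.inl (h1.trans h2)
    · exact Or.inr (h1 ▸ h2)
    · exact Or.inr ⟨h1.1, h2 ▸ h1.2⟩
    · exact Or.inr ⟨h1.1, h2.2⟩

/- ### Terms and variables -/

lemma mem_varsT {x : V} {t : Term R V} : x ∈ varsT (R := R) t ↔ t = Term.var x := by
  cases t <;> simp [varsT, eq_comm]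

lemma mem_resT {r : R} {t : Term R V} : r ∈ resT (V := V) t ↔ t = Term.res r := by
  cases t <;> simp [resT, eq_comm]

lemma var_mem_termsQ {q : CQ R V} {x : V} :
    x ∈ varsQ q ↔ (Term.var x : Term R V) ∈ termsQ q := by
  simp only [varsQ, termsQ, Finset.mem_biUnion]
  constructor
  · rintro ⟨a, ha, hx⟩
    refine ⟨a, ha, ?_⟩
    simp only [varsA, Finset.mem_union, mem_varsT] at hx
    simp only [Finset.mem_insert, Finset.mem_singleton]
    tauto
  · rintro ⟨a, ha, hx⟩
    refine ⟨a, ha, ?_⟩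
    simp only [Finset.mem_insert, Finset.mem_singleton] at hx
    simp only [varsA, Finset.mem_union, mem_varsT]
    tauto

lemma res_mem_termsQ {q : CQ R V} {r : R} :
    r ∈ resQ q ↔ (Term.res r : Term R V) ∈ termsQ q := by
  simp only [resQ, termsQ, Finset.mem_biUnion]
  constructor
  · rintro ⟨a, ha, hx⟩
    refine ⟨a, ha, ?_⟩
    simp only [resA, Finset.mem_union, mem_resT] at hx
    simp only [Finset.mem_insert, Finset.mem_singleton]
    tauto
  · rintro ⟨a, ha, hx⟩
    refine ⟨a, ha, ?_⟩
    simp only [Finset.mem_insert, Finset.mem_singleton] at hx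
    simp only [resA, Finset.mem_union, mem_resT]
    tauto

end Aux
section Sigma

set_option linter.unusedSectionVars false
set_option maxHeartbeats 1000000

variable {R V : Type} [DecidableEq R] [DecidableEq V] [LinearOrder (Term R V)]

lemma sigmaP_spec {q : CQ R V} {P : Finset (CQ R V)} {x : V} (hx : x ∈ varsQ q) :
    sigmaP q P x ∈ termsQ q ∧ reach P (Term.var x) (sigmaP q P x) ∧
      ∀ t ∈ termsQ q, reach P (Term.var x) t → sigmaP q P x ≤ t := by
  have hne : ((termsQ q).filter (fun t => reach P (Term.var x) t)).Nonempty :=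
    ⟨Term.var x, Finset.mem_filter.2 ⟨var_mem_termsQ.1 hx, reach_refl _ _⟩⟩
  have hσ : sigmaP q P x = ((termsQ q).filter (fun t => reach P (Term.var x) t)).min' hne := by
    simp [sigmaP, hne]
  have hmem := Finset.min'_mem _ hne
  rw [← hσ] at hmem
  have hmem' := Finset.mem_filter.1 hmem
  refine ⟨hmem'.1, hmem'.2, ?_⟩
  intro t ht hr
  rw [hσ]
  exact Finset.min'_le _ _ (Finset.mem_filter.2 ⟨ht, hr⟩)

lemma sigmaP_eq_of_reach {q : CQ R V} {P : Finset (CQ R V)} {x y : V} (hx : x ∈ varsQ q)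
    (hr : reach P (Term.var x) (Term.var y)) : sigmaP q P x = sigmaP q P y := by
  have hset : ((termsQ q).filter (fun t => reach P (Term.var x) t)) =
      ((termsQ q).filter (fun t => reach P (Term.var y) t)) := by
    ext t
    simp only [Finset.mem_filter, and_congr_right_iff]
    intro _
    exact ⟨fun h => reach_trans (reach_symm hr) h, fun h => reach_trans hr h⟩
  have hnex : ((termsQ q).filter (fun t => reach P (Term.var x) t)).Nonempty :=
    ⟨Term.var x, Finset.mem_filter.2 ⟨var_mem_termsQ.1 hx, reach_refl _ _⟩⟩
  have hney : ((termsQ q).filter (fun t => reach P (Term.var y) t)).Nonempty := hset ▸ hnex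
  simp only [sigmaP, dif_pos hnex, dif_pos hney]
  congr 1

lemma sigmaP_res_of_reach {q : CQ R V} {P : Finset (CQ R V)} {x : V} {r : R}
    (hord : ∀ (r : R) (y : V), (Term.res r : Term R V) < Term.var y)
    (hU : UnifiablePart q P) (hx : x ∈ varsQ q) (hr : (Term.res r : Term R V) ∈ termsQ q)
    (h : reach P (Term.var x) (Term.res r)) : sigmaP q P x = Term.res r := by
  obtain ⟨hmem, hreach, hle⟩ := sigmaP_spec (P := P) hx
  have h1 : sigmaP q P x ≤ Term.res r := hle _ hr h
  cases hσ : sigmaP q P x with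
  | res r' =>
    have : r' = r := by
      apply hU r' r (hσ ▸ hmem) hr
      exact reach_trans (reach_symm (hσ ▸ hreach)) h
    rw [this]
  | var z =>
    exfalso
    rw [hσ] at h1
    exact absurd (lt_of_lt_of_le (hord r z) h1) (lt_irrefl _)

lemma sigmaP_var {q : CQ R V} {P : Finset (CQ R V)} {x y : V} (hx : x ∈ varsQ q)
    (h : sigmaP q P x = Term.var y) :
    y ∈ varsQ q ∧ reach P (Term.var x) (Term.var y) ∧ sigmaP q P y = Term.var y := by
  obtain ⟨hmem, hreach, _⟩ := sigmaP_spec (P := P) hx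
  rw [h] at hmem hreach
  refine ⟨var_mem_termsQ.2 hmem, hreach, ?_⟩
  rw [← sigmaP_eq_of_reach hx hreach, h]

lemma sigmaP_res {q : CQ R V} {P : Finset (CQ R V)} {x : V} {r : R} (hx : x ∈ varsQ q)
    (h : sigmaP q P x = Term.res r) :
    r ∈ resQ q ∧ reach P (Term.var x) (Term.res r) := by
  obtain ⟨hmem, hreach, _⟩ := sigmaP_spec (P := P) hx
  rw [h] at hmem hreach
  exact ⟨res_mem_termsQ.2 hmem, hreach⟩

/-- `appT π` is constant on reach-classes of a unifiable partition, for expansions. -/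
lemma exp_appT_const {S : Summary R} {q : CQ R V} {τ π : V → Option R}
    {P' : Finset (CQ R V)}
    (hord : ∀ (r : R) (y : V), (Term.res r : Term R V) < Term.var y)
    (hpart : IsPartition q P') (hU : UnifiablePart q P')
    (hπ : π ∈ ExpSet S q τ P') {t t' : Term R V}
    (ht : t ∈ termsQ q) (ht' : t' ∈ termsQ q) (h : reach P' t t') :
    appT π t = appT π t' := by
  have main : ∀ {x : V}, x ∈ varsQ q → ∀ {s : Term R V}, s ∈ termsQ q →
      reach P' (Term.var x) s → appT π (Term.var x) = appT π s := by
    intro x hx s hs hr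
    cases s with
    | res r =>
      have hσ := sigmaP_res_of_reach hord hU hx hs hr
      have := (hπ.2.2 x hx).2.2 r hσ
      simpa [appT] using this
    | var y =>
      have hy : y ∈ varsQ q := var_mem_termsQ.2 hs
      have hσ : sigmaP q P' x = sigmaP q P' y := sigmaP_eq_of_reach hx hr
      cases hσx : sigmaP q P' x with
      | res r =>
        have h1 := (hπ.2.2 x hx).2.2 r hσx
        have h2 := (hπ.2.2 y hy).2.2 r (hσ ▸ hσx)
        simp only [appT]
        rw [h1, h2]
      | var z =>
        have h1 := (hπ.2.2 x hx).2.1 z hσx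
        have h2 := (hπ.2.2 y hy).2.1 z (hσ ▸ hσx)
        simp only [appT]
        rw [h1, h2]
  cases t with
  | var x => exact main (var_mem_termsQ.2 ht) ht' h
  | res r =>
    cases t' with
    | var y => exact (main (var_mem_termsQ.2 ht') ht (reach_symm h)).symm
    | res r' => simp [appT, hU r r' ht ht' h]

end Sigma
section Ppi

set_option linter.unusedSectionVars false
set_option maxHeartbeats 1000000

variable {R V : Type} [DecidableEq R] [DecidableEq V] [Inhabited R]

/-- The partition of `q` induced by a substitution `π`. -/
noncomputable def Ppi (π : V → Option R) (q : CQ R V) : Finset (CQ R V) :=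
  q.image (fun a => q.filter (fun a' => appAtomD π a' = appAtomD π a))

lemma Ppi_isPartition (π : V → Option R) (q : CQ R V) : IsPartition q (Ppi π q) := by
  refine ⟨?_, ?_, ?_⟩
  · intro u hu
    obtain ⟨a, ha, rfl⟩ := Finset.mem_image.1 hu
    exact ⟨a, Finset.mem_filter.2 ⟨ha, rfl⟩⟩
  · intro u hu u' hu' hne
    obtain ⟨a, ha, rfl⟩ := Finset.mem_image.1 hu
    obtain ⟨a', ha', rfl⟩ := Finset.mem_image.1 hu'
    rw [Finset.disjoint_left]
    intro b hb hb'
    have h1 := (Finset.mem_filter.1 hb).2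
    have h2 := (Finset.mem_filter.1 hb').2
    apply hne
    rw [← h1, ← h2]
  · ext a
    simp only [Finset.mem_biUnion, id]
    constructor
    · rintro ⟨u, hu, ha⟩
      obtain ⟨a', ha', rfl⟩ := Finset.mem_image.1 hu
      exact (Finset.mem_filter.1 ha).1
    · intro ha
      exact ⟨_, Finset.mem_image.2 ⟨a, ha, rfl⟩, Finset.mem_filter.2 ⟨ha, rfl⟩⟩

lemma appT_eq_some {q : CQ R V} {π : V → Option R}
    (hsome : ∀ x, (π x).isSome ↔ x ∈ varsQ q) {t : Term R V} (ht : t ∈ termsQ q) :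
    appT π t = some (appTD π t) := by
  cases t with
  | res r => rfl
  | var x =>
    have hx : x ∈ varsQ q := var_mem_termsQ.2 ht
    obtain ⟨r, hr⟩ := Option.isSome_iff_exists.1 ((hsome x).2 hx)
    simp [appT, appTD, hr]

lemma Ppi_reach_appT {q : CQ R V} {π : V → Option R}
    (hsome : ∀ x, (π x).isSome ↔ x ∈ varsQ q) {t t' : Term R V}
    (h : reach (Ppi π q) t t') : appT π t = appT π t' := by
  induction h with
  | rel t t' h =>
    obtain ⟨u, hu, a, ha, a', ha', hcase⟩ := h
    obtain ⟨a0, _, rfl⟩ := Finset.mem_image.1 hu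
    have haq : a ∈ q := (Finset.mem_filter.1 ha).1
    have haq' : a' ∈ q := (Finset.mem_filter.1 ha').1
    have hkey : appAtomD π a = appAtomD π a' := by
      rw [(Finset.mem_filter.1 ha).2, (Finset.mem_filter.1 ha').2]
    have h1 := mem_termsQ_of_mem haq
    have h2 := mem_termsQ_of_mem haq'
    have hD : appTD π t = appTD π t' ∧ t ∈ termsQ q ∧ t' ∈ termsQ q := by
      rcases hcase with ⟨h3, h4⟩ | ⟨h3, h4⟩ | ⟨h3, h4⟩ <;> subst h3 <;> subst h4
      · exact ⟨congrArg (fun p => p.1) hkey, h1.1, h2.1⟩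
      · exact ⟨congrArg (fun p => p.2.1) hkey, h1.2.1, h2.2.1⟩
      · exact ⟨congrArg (fun p => p.2.2) hkey, h1.2.2, h2.2.2⟩
    rw [appT_eq_some hsome hD.2.1, appT_eq_some hsome hD.2.2, hD.1]
  | refl t => rfl
  | symm t t' _ ih => exact ih.symm
  | trans t t' t'' _ _ ih1 ih2 => exact ih1.trans ih2

end Ppi
section PpiExp

set_option linter.unusedSectionVars false
set_option maxHeartbeats 1000000

variable {R V : Type} [DecidableEq R] [DecidableEq V] [Inhabited R] [LinearOrder (Term R V)]

lemma Ppi_unifiable {q : CQ R V} {π : V → Option R}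
    (hsome : ∀ x, (π x).isSome ↔ x ∈ varsQ q) : UnifiablePart q (Ppi π q) := by
  intro r r' _ _ hr
  have := Ppi_reach_appT hsome hr
  simpa [appT] using this

lemma pref_Ppi {S : Summary R} {q : CQ R V} {τ π : V → Option R} {P' : Finset (CQ R V)}
    (hord : ∀ (r : R) (y : V), (Term.res r : Term R V) < Term.var y)
    (hpart : IsPartition q P') (hU : UnifiablePart q P')
    (hπ : π ∈ ExpSet S q τ P') : pref P' (Ppi π q) := by
  intro u hu
  obtain ⟨a0, ha0⟩ := hpart.1 u hu
  have ha0q : a0 ∈ q := block_subset hpart hu ha0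
  refine ⟨q.filter (fun a' => appAtomD π a' = appAtomD π a0),
    Finset.mem_image.2 ⟨a0, ha0q, rfl⟩, ?_⟩
  intro a ha
  have haq : a ∈ q := block_subset hpart hu ha
  refine Finset.mem_filter.2 ⟨haq, ?_⟩
  have h1 := mem_termsQ_of_mem haq
  have h2 := mem_termsQ_of_mem ha0q
  have key : ∀ t t', t ∈ termsQ q → t' ∈ termsQ q → edgeRel P' t t' →
      appTD π t = appTD π t' := by
    intro t t' ht ht' he
    have := exp_appT_const hord hpart hU hπ ht ht' (Relation.EqvGen.rel _ _ he)
    rw [appT_eq_some hπ.1 ht, appT_eq_some hπ.1 ht'] at this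
    exact Option.some_injective _ this
  have e1 : appTD π a.1 = appTD π a0.1 :=
    key _ _ h1.1 h2.1 ⟨u, hu, a, ha, a0, ha0, Or.inl ⟨rfl, rfl⟩⟩
  have e2 : appTD π a.2.1 = appTD π a0.2.1 :=
    key _ _ h1.2.1 h2.2.1 ⟨u, hu, a, ha, a0, ha0, Or.inr (Or.inl ⟨rfl, rfl⟩)⟩
  have e3 : appTD π a.2.2 = appTD π a0.2.2 :=
    key _ _ h1.2.2 h2.2.2 ⟨u, hu, a, ha, a0, ha0, Or.inr (Or.inr ⟨rfl, rfl⟩)⟩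
  show (appTD π a.1, appTD π a.2.1, appTD π a.2.2)
      = (appTD π a0.1, appTD π a0.2.1, appTD π a0.2.2)
  rw [e1, e2, e3]

lemma exp_of_pref_Ppi {S : Summary R} {q : CQ R V} {τ π : V → Option R}
    {P' : Finset (CQ R V)}
    (hsome : ∀ x, (π x).isSome ↔ x ∈ varsQ q)
    (hdom : ∀ x r, π x = some r → r ∈ S.dom)
    (hmu : ∀ x ∈ varsQ q, Option.map (appMu S) (π x) = τ x)
    (hpart : IsPartition q P') (hpref : pref P' (Ppi π q)) :
    π ∈ ExpSet S q τ P' ∧ P' ∈ Btau S q τ := by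
  have hreach : ∀ {t t' : Term R V}, reach P' t t' → appT π t = appT π t' :=
    fun h => Ppi_reach_appT hsome (reach_mono hpref h)
  have hvar : ∀ x ∈ varsQ q, ∀ y, sigmaP q P' x = Term.var y → π x = π y := by
    intro x hx y hσ
    have := (sigmaP_var hx hσ).2.1
    have := hreach this
    simpa [appT] using this
  have hres : ∀ x ∈ varsQ q, ∀ r, sigmaP q P' x = Term.res r → π x = some r := by
    intro x hx r hσ
    have := (sigmaP_res hx hσ).2
    have := hreach this
    simpa [appT] using this
  have hexp : π ∈ ExpSet S q τ P' := by
    refine ⟨hsome, hdom, fun x hx => ⟨hmu x hx, hvar x hx, hres x hx⟩⟩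
  refine ⟨hexp, ?_⟩
  have hU : UnifiablePart q P' := by
    intro r r' _ _ hr
    have := hreach hr
    simpa [appT] using this
  refine ⟨⟨hpart, hU⟩, ?_⟩
  intro x hx
  constructor
  · intro y hσ
    have hy : y ∈ varsQ q := (sigmaP_var hx hσ).1
    rw [← hmu x hx, ← hmu y hy, hvar x hx y hσ]
  · intro r hσ
    rw [← hmu x hx, hres x hx r hσ]
    rfl

/-- Expansion sets are antitone. -/
lemma expSet_mono {S : Summary R} {q : CQ R V} {τ π : V → Option R}
    {P P' : Finset (CQ R V)}
    (hord : ∀ (r : R) (y : V), (Term.res r : Term R V) < Term.var y)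
    (hPpart : IsPartition q P) (hpref : pref P P')
    (hpart' : IsPartition q P') (hU' : UnifiablePart q P')
    (hπ : π ∈ ExpSet S q τ P') : π ∈ ExpSet S q τ P := by
  have h1 : pref P' (Ppi π q) := pref_Ppi hord hpart' hU' hπ
  exact (exp_of_pref_Ppi hπ.1 hπ.2.1 (fun x hx => (hπ.2.2 x hx).1) hPpart
    (pref_trans hpref h1)).1

end PpiExp
section Counting

set_option linter.unusedSectionVars false
set_option maxHeartbeats 1000000

variable {R V : Type} [DecidableEq R] [DecidableEq V] [Inhabited R] [LinearOrder (Term R V)]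

lemma varsA_muAtom (S : Summary R) (a : Atom R V) : varsA (muAtom S a) = varsA a := by
  have : ∀ t : Term R V, varsT (muTerm S t) = varsT t := by
    intro t; cases t <;> simp [muTerm, varsT]
  simp [varsA, muAtom, this]

lemma varsQ_muQ (S : Summary R) (q : CQ R V) : varsQ (muQ S q) = varsQ q := by
  ext x
  simp only [varsQ, muQ, Finset.mem_biUnion, Finset.mem_image]
  constructor
  · rintro ⟨a, ⟨b, hb, rfl⟩, hx⟩
    exact ⟨b, hb, by rwa [varsA_muAtom] at hx⟩
  · rintro ⟨b, hb, hx⟩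
    exact ⟨muAtom S b, ⟨b, hb, rfl⟩, by rwa [varsA_muAtom]⟩

lemma mem_vrngP {q : CQ R V} {P' : Finset (CQ R V)} {y : V} :
    y ∈ vrngP q P' ↔ y ∈ varsQ q ∧ ∃ x ∈ varsQ q, sigmaP q P' x = Term.var y :=
  Finset.mem_filter

lemma vrng_self {q : CQ R V} {P' : Finset (CQ R V)} {y : V} (hy : y ∈ vrngP q P') :
    y ∈ varsQ q ∧ sigmaP q P' y = Term.var y := by
  obtain ⟨hy1, x, hx, hσ⟩ := mem_vrngP.1 hy
  exact ⟨hy1, (sigmaP_var hx hσ).2.2⟩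

lemma vrng_of_sigma {q : CQ R V} {P' : Finset (CQ R V)} {x y : V} (hx : x ∈ varsQ q)
    (hσ : sigmaP q P' x = Term.var y) : y ∈ vrngP q P' :=
  mem_vrngP.2 ⟨(sigmaP_var hx hσ).1, x, hx, hσ⟩

/-- Building an expansion from a choice of bucket elements. -/
noncomputable def buildPi (q : CQ R V) (P' : Finset (CQ R V))
    (g : ∀ y ∈ vrngP q P', R) : V → Option R :=
  fun x =>
    if hx : x ∈ varsQ q then
      (match sigmaP q P' x with
       | Term.res r => some r
       | Term.var y => if hy : y ∈ vrngP q P' then some (g y hy) else none)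
    else none

/-- The finset of `τ`-expansions to `P'`. -/
noncomputable def expF (S : Summary R) (q : CQ R V) (τ : V → Option R)
    (P' : Finset (CQ R V)) : Finset (V → Option R) :=
  ((vrngP q P').pi (fun y => S.dom.filter (fun r => some (S.μ r) = τ y))).image
    (fun g => buildPi q P' g)

lemma buildPi_not_vars {q : CQ R V} {P' : Finset (CQ R V)} {g : ∀ y ∈ vrngP q P', R}
    {x : V} (hx : x ∉ varsQ q) : buildPi q P' g x = none := by
  simp [buildPi, hx]

lemma buildPi_res {q : CQ R V} {P' : Finset (CQ R V)} {g : ∀ y ∈ vrngP q P', R}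
    {x : V} (hx : x ∈ varsQ q) {r : R} (hσ : sigmaP q P' x = Term.res r) :
    buildPi q P' g x = some r := by
  simp [buildPi, hx, hσ]

lemma buildPi_var {q : CQ R V} {P' : Finset (CQ R V)} {g : ∀ y ∈ vrngP q P', R}
    {x y : V} (hx : x ∈ varsQ q) (hσ : sigmaP q P' x = Term.var y) :
    buildPi q P' g x = some (g y (vrng_of_sigma hx hσ)) := by
  simp [buildPi, hx, hσ, vrng_of_sigma hx hσ]

lemma buildPi_mem_ExpSet {S : Summary R} {q : CQ R V} {τ : V → Option R}
    {P' : Finset (CQ R V)} (hq : resQ q ⊆ S.dom) (hP' : P' ∈ Btau S q τ)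
    {g : ∀ y ∈ vrngP q P', R}
    (hg : ∀ y (hy : y ∈ vrngP q P'), g y hy ∈ S.dom.filter (fun r => some (S.μ r) = τ y)) :
    buildPi q P' g ∈ ExpSet S q τ P' := by
  set π := buildPi q P' g with hπdef
  have hval : ∀ x ∈ varsQ q, (∃ r, sigmaP q P' x = Term.res r ∧ π x = some r) ∨
      (∃ y, ∃ hy : y ∈ vrngP q P', sigmaP q P' x = Term.var y ∧ π x = some (g y hy)) := by
    intro x hx
    cases hσ : sigmaP q P' x with
    | res r => exact Or.inl ⟨r, rfl, buildPi_res hx hσ⟩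
    | var y => exact Or.inr ⟨y, vrng_of_sigma hx hσ, rfl, buildPi_var hx hσ⟩
  have hsome : ∀ x, (π x).isSome ↔ x ∈ varsQ q := by
    intro x
    constructor
    · intro h
      by_contra hx
      rw [hπdef, buildPi_not_vars hx] at h
      simp at h
    · intro hx
      rcases hval x hx with ⟨r, _, h⟩ | ⟨y, hy, _, h⟩ <;> simp [h]
  refine ⟨hsome, ?_, ?_⟩
  · intro x r h
    have hx : x ∈ varsQ q := by
      by_contra hx
      rw [hπdef, buildPi_not_vars hx] at h
      simp at h
    rcases hval x hx with ⟨r', hσ, h'⟩ | ⟨y, hy, hσ, h'⟩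
    · rw [h'] at h
      obtain rfl : r' = r := Option.some_injective _ h
      exact hq (sigmaP_res hx hσ).1
    · rw [h'] at h
      obtain rfl : g y hy = r := Option.some_injective _ h
      exact (Finset.mem_filter.1 (hg y hy)).1
  · intro x hx
    refine ⟨?_, ?_, ?_⟩
    · rcases hval x hx with ⟨r, hσ, h'⟩ | ⟨y, hy, hσ, h'⟩
      · rw [h']
        have := (hP'.2 x hx).2 r hσ
        rw [this]
        rfl
      · rw [h']
        have hdom := (Finset.mem_filter.1 (hg y hy)).1
        have hμ := (Finset.mem_filter.1 (hg y hy)).2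
        have hτxy := (hP'.2 x hx).1 y hσ
        rw [hτxy, ← hμ]
        simp [appMu, hdom]
    · intro y hσ
      have hy : y ∈ vrngP q P' := vrng_of_sigma hx hσ
      have hyv := vrng_self hy
      rw [hπdef, buildPi_var hx hσ, buildPi_var hyv.1 hyv.2]
    · intro r hσ
      rw [hπdef]
      exact buildPi_res hx hσ

lemma expSet_eq_buildPi {S : Summary R} {q : CQ R V} {τ π : V → Option R}
    {P' : Finset (CQ R V)} (hπ : π ∈ ExpSet S q τ P') :
    ∃ g ∈ (vrngP q P').pi (fun y => S.dom.filter (fun r => some (S.μ r) = τ y)),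
      buildPi q P' g = π := by
  have hget : ∀ y ∈ varsQ q, ∃ r, π y = some r := by
    intro y hy
    exact Option.isSome_iff_exists.1 ((hπ.1 y).2 hy)
  choose f hf using hget
  refine ⟨fun y hy => f y (vrng_self hy).1, ?_, ?_⟩
  · rw [Finset.mem_pi]
    intro y hy
    have hy1 := (vrng_self hy).1
    have hfy := hf y hy1
    refine Finset.mem_filter.2 ⟨hπ.2.1 y _ hfy, ?_⟩
    have := (hπ.2.2 y hy1).1
    rw [hfy] at this
    simp only [Option.map_some] at this
    rw [← this]
    have hdom := hπ.2.1 y _ hfy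
    simp [appMu, hdom]
  · funext x
    by_cases hx : x ∈ varsQ q
    · cases hσ : sigmaP q P' x with
      | res r =>
        rw [buildPi_res hx hσ]
        exact ((hπ.2.2 x hx).2.2 r hσ).symm
      | var y =>
        rw [buildPi_var hx hσ]
        have hy := vrng_of_sigma hx hσ
        have hy1 := (vrng_self hy).1
        rw [← hf y hy1]
        exact ((hπ.2.2 x hx).2.1 y hσ).symm
    · rw [buildPi_not_vars hx]
      cases h' : π x with
      | none => rfl
      | some r => exact absurd ((hπ.1 x).1 (by simp [h'])) hx

lemma expF_coe {S : Summary R} {q : CQ R V} {τ : V → Option R} {P' : Finset (CQ R V)}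
    (hq : resQ q ⊆ S.dom) (hP' : P' ∈ Btau S q τ) :
    (↑(expF S q τ P') : Set (V → Option R)) = ExpSet S q τ P' := by
  ext π
  simp only [Finset.coe_image, Set.mem_image, Finset.mem_coe, expF]
  constructor
  · rintro ⟨g, hg, rfl⟩
    exact buildPi_mem_ExpSet hq hP' (fun y hy => Finset.mem_pi.1 hg y hy)
  · intro hπ
    obtain ⟨g, hg, hgeq⟩ := expSet_eq_buildPi hπ
    exact ⟨g, hg, hgeq⟩

lemma expF_card {S : Summary R} {q : CQ R V} {τ : V → Option R} {P' : Finset (CQ R V)}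
    (hτsome : ∀ y ∈ varsQ q, (τ y).isSome) :
    (expF S q τ P').card = cCoef S q τ P' := by
  rw [expF, Finset.card_image_of_injOn]
  · rw [Finset.card_pi, cCoef]
    apply Finset.prod_congr rfl
    intro y hy
    obtain ⟨b, hb⟩ := Option.isSome_iff_exists.1 (hτsome y (vrng_self hy).1)
    rw [hb]
    show (S.dom.filter (fun r => some (S.μ r) = some b)).card = size1 S b
    rw [size1]
    congr 1
    apply Finset.filter_congr
    intro r _
    simp
  · intro g hg g' hg' heq
    funext y hy
    have h1 : buildPi q P' g y = some (g y hy) := by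
      have hyv := vrng_self hy
      rw [buildPi_var hyv.1 hyv.2]
    have h2 : buildPi q P' g' y = some (g' y hy) := by
      have hyv := vrng_self hy
      rw [buildPi_var hyv.1 hyv.2]
    have heq' : buildPi q P' g = buildPi q P' g' := heq
    rw [heq'] at h1
    rw [h1] at h2
    exact (Option.some_injective _ h2.symm).symm

end Counting
section Hall

set_option linter.unusedSectionVars false
set_option maxHeartbeats 1000000

variable {R V : Type} [DecidableEq R] [DecidableEq V]

lemma chain'_head_all {α : Type*} {r s : α → α → Prop} (hrs : ∀ a b, r a b → s a b)
    (htr : ∀ {a b c}, s a b → s b c → s a c) (hrefl : ∀ a, s a a) :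
    ∀ {l : List α} {a : α}, l.Chain' r → l.head? = some a → ∀ X ∈ l, s a X := by
  intro l
  induction l with
  | nil => intro a _ _ X hX; simp at hX
  | cons b t ih =>
    intro a hc hh X hX
    obtain rfl : b = a := by simpa using hh
    rcases List.mem_cons.1 hX with rfl | hX'
    · exact hrefl X
    · cases t with
      | nil => simp at hX'
      | cons c t' =>
        have h1 : r b c := (List.isChain_cons_cons.1 hc).1
        have h2 := (List.isChain_cons_cons.1 hc).2
        exact htr (hrs _ _ h1) (ih h2 rfl X hX')

lemma chain'_last_all {α : Type*} {r s : α → α → Prop} (hrs : ∀ a b, r a b → s a b)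
    (htr : ∀ {a b c}, s a b → s b c → s a c) (hrefl : ∀ a, s a a)
    {l : List α} {a : α} (hc : l.Chain' r) (hl : l.getLast? = some a) : ∀ X ∈ l, s X a := by
  have hc' : l.reverse.Chain' (flip r) := by
    refine List.isChain_reverse.2 ?_
    exact hc
  have hh : l.reverse.head? = some a := by rwa [List.head?_reverse]
  intro X hX
  exact chain'_head_all (r := flip r) (s := flip s) (fun a b h => hrs b a h)
    (fun h1 h2 => htr h2 h1) hrefl hc' hh X (List.mem_reverse.2 hX)

lemma chain'_sPref_nodup {q : CQ R V} :
    ∀ {l : List (Finset (CQ R V))}, (∀ X ∈ l, IsPartition q X) → l.Chain' sPref →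
      l.Nodup := by
  intro l
  induction l with
  | nil => intro _ _; exact List.nodup_nil
  | cons a t ih =>
    intro hpart hc
    refine List.nodup_cons.2 ⟨?_, ih (fun X hX => hpart X (List.mem_cons_of_mem a hX)) hc.tail⟩
    intro ha
    cases t with
    | nil => simp at ha
    | cons b t' =>
      have h1 : sPref a b := (List.isChain_cons_cons.1 hc).1
      have h2 : pref b a :=
        chain'_head_all (r := sPref) (s := pref) (fun _ _ h => h.1)
          (fun h1 h2 => pref_trans h1 h2) pref_refl (List.isChain_cons_cons.1 hc).2 rfl a ha
      have : a = b := pref_antisymm (hpart a (by simp)) (hpart b (by simp)) h1.1 h2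
      exact h1.2 this

lemma finite_lists {α : Type*} (s : Finset α) :
    ∀ n : ℕ, {l : List α | l.length ≤ n ∧ ∀ x ∈ l, x ∈ s}.Finite := by
  intro n
  induction n with
  | zero =>
    apply Set.Finite.subset (Set.finite_singleton ([] : List α))
    rintro l ⟨h1, _⟩
    simp [List.length_eq_zero_iff.1 (Nat.le_zero.1 h1)]
  | succ n ih =>
    apply Set.Finite.subset
      (((Set.finite_singleton ([] : List α)).union
        (((s.finite_toSet.prod ih)).image (fun p => p.1 :: p.2))))
    rintro l ⟨h1, h2⟩
    cases l with
    | nil => exact Or.inl rfl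
    | cons a t =>
      refine Or.inr ⟨(a, t), ⟨h2 a (by simp), ?_, ?_⟩, rfl⟩
      · simpa using h1
      · exact fun x hx => h2 x (List.mem_cons_of_mem a hx)

lemma chainSet_finite (q : CQ R V) (P P' : Finset (CQ R V)) : (chainSet q P P').Finite := by
  apply Set.Finite.subset (finite_lists q.powerset.powerset q.powerset.powerset.card)
  rintro l ⟨hne, hch, hpb, hh, hlast⟩
  have hpart : ∀ X ∈ l, IsPartition q X := fun X hX => (hpb X hX).1
  have hnd := chain'_sPref_nodup hpart hch
  constructor
  · calc l.length = l.toFinset.card := (List.toFinset_card_of_nodup hnd).symm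
      _ ≤ _ := Finset.card_le_card
        (fun X hX => part_mem_pp (hpart X (List.mem_toFinset.1 hX)))
  · exact fun x hx => part_mem_pp (hpart x hx)

/-- The chains from `P` to `P'` as a finset. -/
noncomputable def chainsF (q : CQ R V) (P P' : Finset (CQ R V)) :
    Finset (List (Finset (CQ R V))) := (chainSet_finite q P P').toFinset

lemma mem_chainsF {q : CQ R V} {P P' : Finset (CQ R V)} {l : List (Finset (CQ R V))} :
    l ∈ chainsF q P P' ↔ l ∈ chainSet q P P' := Set.Finite.mem_toFinset _

lemma Kcoef_eq (q : CQ R V) (P P' : Finset (CQ R V)) :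
    Kcoef q P P' =
      (((chainsF q P P').filter (fun l => Even (l.length - 1))).card : ℤ) -
        (((chainsF q P P').filter (fun l => Odd (l.length - 1))).card : ℤ) := by
  rw [Kcoef]
  congr 2
  · have : {l ∈ chainSet q P P' | Even (l.length - 1)} =
        ↑((chainsF q P P').filter (fun l => Even (l.length - 1))) := by
      ext l
      simp [mem_chainsF, Set.mem_setOf_eq, Finset.mem_filter, and_comm]
    rw [this, Set.ncard_coe_finset]
  · have : {l ∈ chainSet q P P' | Odd (l.length - 1)} =
        ↑((chainsF q P P').filter (fun l => Odd (l.length - 1))) := by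
      ext l
      simp [mem_chainsF, Set.mem_setOf_eq, Finset.mem_filter, and_comm]
    rw [this, Set.ncard_coe_finset]

/-- The interval of partitions between `P` and `Q`, as a finset. -/
noncomputable def IFin (q : CQ R V) (P Q : Finset (CQ R V)) : Finset (Finset (CQ R V)) :=
  (q.powerset.powerset).filter (fun P' => IsPartition q P' ∧ pref P P' ∧ pref P' Q)

lemma mem_IFin {q : CQ R V} {P Q P'' : Finset (CQ R V)} :
    P'' ∈ IFin q P Q ↔ IsPartition q P'' ∧ pref P P'' ∧ pref P'' Q := by
  rw [IFin, Finset.mem_filter]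
  constructor
  · tauto
  · intro h
    exact ⟨part_mem_pp h.1, h⟩

lemma chainSet_self {q : CQ R V} {P : Finset (CQ R V)} (hP : P ∈ pbase q) :
    chainSet q P P = {[P]} := by
  ext l
  constructor
  · rintro ⟨hne, hch, hpb, hh, hlast⟩
    cases l with
    | nil => exact absurd rfl hne
    | cons a t =>
      obtain rfl : a = P := by simpa using hh
      cases t with
      | nil => rfl
      | cons b t' =>
        exfalso
        have h1 : sPref a b := (List.isChain_cons_cons.1 hch).1
        have h2 : pref b a :=
          chain'_last_all (r := sPref) (s := pref) (fun _ _ h => h.1)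
            (fun ha hb => pref_trans ha hb) pref_refl hch hlast b (by simp)
        exact h1.2 (pref_antisymm ((hpb a (by simp)).1) ((hpb b (by simp)).1) h1.1 h2)
  · rintro rfl
    exact ⟨by simp, List.isChain_singleton P, fun X hX => by simpa using (by simpa using hX) ▸ hP, rfl, rfl⟩

end Hall
section Hall2

set_option linter.unusedSectionVars false
set_option maxHeartbeats 1000000

variable {R V : Type} [DecidableEq R] [DecidableEq V]

/-- The chain involution: remove or append the top element `Q`. -/
noncomputable def chPhi (Q : Finset (CQ R V)) (l : List (Finset (CQ R V))) :
    List (Finset (CQ R V)) :=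
  if l.getLast? = some Q then l.dropLast else l ++ [Q]

lemma phi_spec {q : CQ R V} {P Q : Finset (CQ R V)} (hQp : Q ∈ pbase q)
    (hne : P ≠ Q) {l : List (Finset (CQ R V))} {P'' : Finset (CQ R V)}
    (hPI : P'' ∈ IFin q P Q) (hl : l ∈ chainSet q P P'') :
    (∃ P''' ∈ IFin q P Q, chPhi Q l ∈ chainSet q P P''') ∧
      (Even ((chPhi Q l).length - 1) ↔ ¬ Even (l.length - 1)) ∧ chPhi Q (chPhi Q l) = l := by
  obtain ⟨hne0, hch, hpb, hh, hlast⟩ := hl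
  obtain ⟨hpart'', hPP'', hP''Q⟩ := mem_IFin.1 hPI
  by_cases hQend : l.getLast? = some Q
  · -- drop the last element
    obtain rfl : Q = P'' := by rw [hlast] at hQend; exact (by simpa using hQend : P'' = Q).symm
    have hφ : chPhi Q l = l.dropLast := if_pos hQend
    set d := l.dropLast with hddef
    have hd : d ++ [Q] = l := List.dropLast_append_getLast? Q hQend
    have hdne : d ≠ [] := by
      intro h
      rw [h] at hd
      apply hne
      rw [← hd] at hh
      exact (by simpa using hh : Q = P).symm
    have hch2 : (d ++ [Q]).Chain' sPref := by rw [hd]; exact hch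
    have hch3 := List.isChain_append.1 hch2
    have hlastd : d.getLast? = some (d.getLast hdne) := List.getLast?_eq_getLast_of_ne_nil hdne
    set P''' := d.getLast hdne with hP3def
    have hP3mem : P''' ∈ l := by rw [← hd]; exact List.mem_append_left _ (List.getLast_mem hdne)
    have hsP3Q : sPref P''' Q := hch3.2.2 P''' hlastd Q rfl
    have hmemd : ∀ X ∈ d, X ∈ l := by
      intro X hX
      rw [← hd]
      exact List.mem_append_left _ hX
    have hheadd : d.head? = some P := by
      rw [← List.head?_append_of_ne_nil d (l₂ := [Q]) hdne, hd]
      exact hh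
    have hprefP : pref P P''' :=
      chain'_head_all (r := sPref) (s := pref) (fun _ _ h => h.1)
        (fun h1 h2 => pref_trans h1 h2) pref_refl hch hh P''' hP3mem
    refine ⟨⟨P''', mem_IFin.2 ⟨(hpb P''' hP3mem).1, hprefP, hsP3Q.1⟩, ?_⟩, ?_, ?_⟩
    · rw [hφ]
      exact ⟨hdne, hch3.1, fun X hX => hpb X (hmemd X hX), hheadd, hlastd⟩
    · rw [hφ]
      have hlen : l.length = d.length + 1 := by rw [← hd]; simp
      obtain ⟨m, hm⟩ : ∃ m, d.length = m + 1 :=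
        ⟨d.length - 1, (Nat.succ_pred_eq_of_pos (List.length_pos_iff_ne_nil.2 hdne)).symm⟩
      rw [hlen, hm]
      simp [Nat.even_add_one]
    · rw [hφ, chPhi, if_neg, hd]
      rw [hlastd]
      intro h
      exact hsP3Q.2 (by simpa using h)
  · -- append Q
    have hP''ne : P'' ≠ Q := by
      intro h
      rw [h] at hlast
      exact hQend hlast
    have hφ : chPhi Q l = l ++ [Q] := if_neg hQend
    have hch2 : (l ++ [Q]).Chain' sPref := by
      apply List.IsChain.append hch (List.isChain_singleton Q)
      intro x hx y hy
      rw [hlast] at hx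
      obtain rfl : P'' = x := by simpa using hx
      obtain rfl : Q = y := by simpa using hy
      exact ⟨hP''Q, hP''ne⟩
    refine ⟨⟨Q, mem_IFin.2 ⟨hQp.1, pref_trans hPP'' hP''Q, pref_refl Q⟩, ?_⟩, ?_, ?_⟩
    · rw [hφ]
      refine ⟨by simp, hch2, ?_, ?_, List.getLast?_concat⟩
      · intro X hX
        rcases List.mem_append.1 hX with h | h
        · exact hpb X h
        · obtain rfl : X = Q := by simpa using h
          exact hQp
      · rw [List.head?_append_of_ne_nil l (l₂ := [Q]) hne0]
        exact hh
    · rw [hφ]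
      obtain ⟨m, hm⟩ : ∃ m, l.length = m + 1 :=
        ⟨l.length - 1, (Nat.succ_pred_eq_of_pos (List.length_pos_iff_ne_nil.2 hne0)).symm⟩
      rw [List.length_append, hm]
      simp [Nat.even_add_one]
    · rw [hφ, chPhi, if_pos (List.getLast?_concat), List.dropLast_concat]

lemma hall {q : CQ R V} {P Q : Finset (CQ R V)} (hPp : P ∈ pbase q) (hQp : Q ∈ pbase q)
    (hPQ : pref P Q) :
    ∑ P' ∈ IFin q P Q, Kcoef q P P' = if P = Q then 1 else 0 := by
  by_cases hPQeq : P = Q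
  · subst hPQeq
    rw [if_pos rfl]
    have hI : IFin q P P = {P} := by
      ext P''
      rw [mem_IFin, Finset.mem_singleton]
      constructor
      · rintro ⟨h1, h2, h3⟩
        exact (pref_antisymm hPp.1 h1 h2 h3).symm
      · rintro rfl
        exact ⟨hPp.1, pref_refl _, pref_refl _⟩
    rw [hI, Finset.sum_singleton, Kcoef_eq]
    have hc : chainsF q P P = {[P]} := by
      ext l
      rw [mem_chainsF, chainSet_self hPp]
      simp
    rw [hc]
    norm_num [Finset.filter_singleton]
  · rw [if_neg hPQeq]
    have keyE : ∑ P' ∈ IFin q P Q,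
          (((chainsF q P P').filter (fun l => Even (l.length - 1))).card : ℤ) =
        (((IFin q P Q).biUnion
          (fun P' => (chainsF q P P').filter (fun l => Even (l.length - 1)))).card : ℤ) := by
      rw [Finset.card_biUnion]
      · push_cast
        rfl
      · intro P1 h1 P2 h2 h12
        rw [Function.onFun, Finset.disjoint_left]
        intro l hl1 hl2
        have e1 := (mem_chainsF.1 (Finset.mem_filter.1 hl1).1).2.2.2.2
        have e2 := (mem_chainsF.1 (Finset.mem_filter.1 hl2).1).2.2.2.2
        rw [e1] at e2
        exact h12 (Option.some_injective _ e2)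
    have keyO : ∑ P' ∈ IFin q P Q,
          (((chainsF q P P').filter (fun l => Odd (l.length - 1))).card : ℤ) =
        (((IFin q P Q).biUnion
          (fun P' => (chainsF q P P').filter (fun l => Odd (l.length - 1)))).card : ℤ) := by
      rw [Finset.card_biUnion]
      · push_cast
        rfl
      · intro P1 h1 P2 h2 h12
        rw [Function.onFun, Finset.disjoint_left]
        intro l hl1 hl2
        have e1 := (mem_chainsF.1 (Finset.mem_filter.1 hl1).1).2.2.2.2
        have e2 := (mem_chainsF.1 (Finset.mem_filter.1 hl2).1).2.2.2.2
        rw [e1] at e2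
        exact h12 (Option.some_injective _ e2)
    have hsum : ∑ P' ∈ IFin q P Q, Kcoef q P P' =
        (((IFin q P Q).biUnion
          (fun P' => (chainsF q P P').filter (fun l => Even (l.length - 1)))).card : ℤ) -
        (((IFin q P Q).biUnion
          (fun P' => (chainsF q P P').filter (fun l => Odd (l.length - 1)))).card : ℤ) := by
      rw [← keyE, ← keyO, ← Finset.sum_sub_distrib]
      exact Finset.sum_congr rfl (fun P' _ => Kcoef_eq q P P')
    rw [hsum]
    have hBij : ((IFin q P Q).biUnion
          (fun P' => (chainsF q P P').filter (fun l => Even (l.length - 1)))).card =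
        ((IFin q P Q).biUnion
          (fun P' => (chainsF q P P').filter (fun l => Odd (l.length - 1)))).card := by
      apply Finset.card_bij' (fun l _ => chPhi Q l) (fun l _ => chPhi Q l)
      · intro l hl
        rw [Finset.mem_biUnion] at hl ⊢
        obtain ⟨P'', hPI, hl⟩ := hl
        rw [Finset.mem_filter, mem_chainsF] at hl
        obtain ⟨⟨P''', hPI', hch'⟩, hpar, _⟩ := phi_spec hQp hPQeq hPI hl.1
        refine ⟨P''', hPI', Finset.mem_filter.2 ⟨mem_chainsF.2 hch', ?_⟩⟩
        rw [← Nat.not_even_iff_odd]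
        intro h
        exact (hpar.1 h) hl.2
      · intro l hl
        rw [Finset.mem_biUnion] at hl ⊢
        obtain ⟨P'', hPI, hl⟩ := hl
        rw [Finset.mem_filter, mem_chainsF] at hl
        obtain ⟨⟨P''', hPI', hch'⟩, hpar, _⟩ := phi_spec hQp hPQeq hPI hl.1
        refine ⟨P''', hPI', Finset.mem_filter.2 ⟨mem_chainsF.2 hch', ?_⟩⟩
        exact hpar.2 (Nat.not_even_iff_odd.2 hl.2)
      · intro l hl
        rw [Finset.mem_biUnion] at hl
        obtain ⟨P'', hPI, hl⟩ := hl
        rw [Finset.mem_filter, mem_chainsF] at hl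
        exact (phi_spec hQp hPQeq hPI hl.1).2.2
      · intro l hl
        rw [Finset.mem_biUnion] at hl
        obtain ⟨P'', hPI, hl⟩ := hl
        rw [Finset.mem_filter, mem_chainsF] at hl
        exact (phi_spec hQp hPQeq hPI hl.1).2.2
    rw [hBij]
    ring

end Hall2
/-- The number of maximal `τ`-expansions to `P` equals
`Σ_{P' ∈ B_τ, P ⪯ P'} K(P,P') · c(τ,P')`. -/
theorem maxExp_ncard_eq_sum {R V : Type} [DecidableEq R] [DecidableEq V] [Inhabited R]
    [LinearOrder (Term R V)]
    (hord : ∀ (r : R) (y : V), (Term.res r : Term R V) < Term.var y)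
    (S : Summary R) (q : CQ R V) (hq : resQ q ⊆ S.dom)
    (τ : V → Option R) (hτ : τ ∈ ansSet (muQ S q) S.H)
    (P : Finset (CQ R V)) (hP : P ∈ Btau S q τ) :
    ((MaxExp S q τ P).ncard : ℤ) =
      ∑ᶠ P' ∈ {P' | P' ∈ Btau S q τ ∧ pref P P'}, Kcoef q P P' * (cCoef S q τ P' : ℤ) := by
  classical
  have hPp : P ∈ pbase q := hP.1
  have hτsome : ∀ y ∈ varsQ q, (τ y).isSome := by
    intro y hy
    exact (hτ.1 y).2 (by rwa [varsQ_muQ])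
  set E := expF S q τ P with hEdef
  have hEcoe : (↑E : Set (V → Option R)) = ExpSet S q τ P := expF_coe hq hP
  have hmemE : ∀ π, π ∈ E ↔ π ∈ ExpSet S q τ P := by
    intro π
    rw [← Finset.mem_coe, hEcoe]
  -- `MaxExp` is the set of expansions whose induced partition is `P` itself
  have hMax : MaxExp S q τ P = ↑(E.filter (fun π => Ppi π q = P)) := by
    ext π
    simp only [MaxExp, Set.mem_setOf_eq, Finset.coe_filter, hmemE]
    constructor
    · rintro ⟨hπ, hmax⟩
      refine ⟨hπ, ?_⟩
      by_contra hne
      apply hmax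
      have hpartPpi : IsPartition q (Ppi π q) := Ppi_isPartition π q
      have hexp := exp_of_pref_Ppi hπ.1 hπ.2.1 (fun x hx => (hπ.2.2 x hx).1) hpartPpi
        (pref_refl _)
      refine ⟨Ppi π q, hexp.2, ⟨pref_Ppi hord hPp.1 hPp.2 hπ, ?_⟩, hexp.1⟩
      exact fun h => hne h.symm
    · rintro ⟨hπ, hPpiP⟩
      refine ⟨hπ, ?_⟩
      rintro ⟨P', hP'B, hsP, hπ'⟩
      have h1 : pref P' (Ppi π q) := pref_Ppi hord hP'B.1.1 hP'B.1.2 hπ'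
      rw [hPpiP] at h1
      exact hsP.2 (pref_antisymm hPp.1 hP'B.1.1 hsP.1 h1)
  rw [hMax, Set.ncard_coe_finset]
  -- the index set as a finset
  set Tf := (q.powerset.powerset).filter
    (fun P' => P' ∈ Btau S q τ ∧ pref P P') with hTfdef
  have hTcoe : {P' | P' ∈ Btau S q τ ∧ pref P P'} = (↑Tf : Set (Finset (CQ R V))) := by
    ext P'
    simp only [Set.mem_setOf_eq, Finset.coe_filter, hTfdef, Finset.mem_filter]
    constructor
    · intro h
      exact ⟨part_mem_pp h.1.1.1, h⟩
    · tauto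
  rw [hTcoe, finsum_mem_coe_finset]
  have hmemTf : ∀ P', P' ∈ Tf ↔ P' ∈ Btau S q τ ∧ pref P P' := by
    intro P'
    rw [hTfdef, Finset.mem_filter]
    constructor
    · tauto
    · intro h
      exact ⟨part_mem_pp h.1.1.1, h⟩
  -- c(τ, P') counts expansions inside E
  have hfil : ∀ P' ∈ Tf, (cCoef S q τ P' : ℤ) =
      ((E.filter (fun π => π ∈ ExpSet S q τ P')).card : ℤ) := by
    intro P' hP'
    obtain ⟨hB, hpref⟩ := (hmemTf P').1 hP'
    have h1 : expF S q τ P' = E.filter (fun π => π ∈ ExpSet S q τ P') := by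
      apply Finset.coe_injective
      rw [expF_coe hq hB, Finset.coe_filter]
      ext π
      simp only [Set.mem_setOf_eq, hmemE]
      constructor
      · intro h
        exact ⟨expSet_mono hord hPp.1 hpref hB.1.1 hB.1.2 h, h⟩
      · tauto
    rw [← h1, expF_card hτsome]
  symm
  calc ∑ P' ∈ Tf, Kcoef q P P' * (cCoef S q τ P' : ℤ)
      = ∑ P' ∈ Tf, ∑ π ∈ E, (if π ∈ ExpSet S q τ P' then Kcoef q P P' else 0) := by
        apply Finset.sum_congr rfl
        intro P' hP'
        rw [← Finset.sum_filter, Finset.sum_const, nsmul_eq_mul, hfil P' hP', mul_comm]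
    _ = ∑ π ∈ E, ∑ P' ∈ Tf, (if π ∈ ExpSet S q τ P' then Kcoef q P P' else 0) :=
        Finset.sum_comm
    _ = ∑ π ∈ E, (if P = Ppi π q then (1 : ℤ) else 0) := by
        apply Finset.sum_congr rfl
        intro π hπE
        have hπ : π ∈ ExpSet S q τ P := (hmemE π).1 hπE
        have hQp : Ppi π q ∈ pbase q := ⟨Ppi_isPartition π q, Ppi_unifiable hπ.1⟩
        have hPQ : pref P (Ppi π q) := pref_Ppi hord hPp.1 hPp.2 hπ
        have hint : Tf.filter (fun P' => π ∈ ExpSet S q τ P') = IFin q P (Ppi π q) := by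
          ext P''
          rw [Finset.mem_filter, mem_IFin, hmemTf]
          constructor
          · rintro ⟨⟨hB, hpref⟩, hπ''⟩
            exact ⟨hB.1.1, hpref, pref_Ppi hord hB.1.1 hB.1.2 hπ''⟩
          · rintro ⟨hpart'', hpref'', hprefPpi⟩
            have hexp := exp_of_pref_Ppi hπ.1 hπ.2.1 (fun x hx => (hπ.2.2 x hx).1)
              hpart'' hprefPpi
            exact ⟨⟨hexp.2, hpref''⟩, hexp.1⟩
        rw [← Finset.sum_filter, hint]
        exact hall hPp hQp hPQ
    _ = ((E.filter (fun π => Ppi π q = P)).card : ℤ) := by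
        rw [Finset.card_filter]
        push_cast
        apply Finset.sum_congr rfl
        intro π _
        by_cases h : P = Ppi π q
        · rw [if_pos h, if_pos h.symm]
        · rw [if_neg h, if_neg (fun h' => h h'.symm)]
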